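/- Let n ≥ 2 and β > 0, let α : [0,∞) → [0,∞) be continuous, and define D(γ) = √( e^{2β} + 2(n−1) e^{β(1+γ)} γ + (n−1) e^{2βγ} (1 + (n−2)γ) ). Let γ : [0,∞) → ℝ be a C¹ solution of the nGPT symmetric cosine-similarity ODE γ̇(t) = 2 α(t) e^{βγ(t)} (1 − γ(t)) ((n−1)γ(t) + 1) / D(γ(t)) with γ(0) = 0. Then 0 ≤ γ(t) ≤ 1 for all t ≥ 0, and 1 − γ(t) ≤ exp( − (2/(n e^{β})) ∫₀^t α(s) ds ). In particular, if ∫₀^∞ α(s) ds = ∞ then γ(t) → 1 as t → ∞. -/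

import Mathlib

open Filter Real intervalIntegral

/-- The denominator `D(γ)` of the nGPT/Peri-LN symmetric cosine-similarity ODE. -/
noncomputable def symDenom (n : ℕ) (β γ : ℝ) : ℝ :=
  Real.sqrt (Real.exp (2 * β) + 2 * (n - 1) * Real.exp (β * (1 + γ)) * γ +
    (n - 1) * Real.exp (2 * β * γ) * (1 + (n - 2) * γ))

/-! The factor `1 - γ` makes `1` an equilibrium, and the field is nonpositive above it, so the
solution cannot exceed `1`. The factor `(n - 1) γ + 1` makes the field nonnegative on
`(-1/(n-1), 1]`, so the solution started at `0` is nondecreasing and stays in `[0, 1]`. There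
`1 ≤ e^{βγ}`, `1 ≤ (n - 1) γ + 1` and `D(γ) ≤ n e^β`, hence
`(1 - γ)' ≤ -(2 α / (n e^β)) (1 - γ)`, and the integrating factor `exp ((2 / (n e^β)) ∫ α)` turns
this into the exponential bound, which forces `γ → 1` when `∫ α` diverges. -/

open Set

theorem le_of_left_le_of_deriv_nonpos_above {f f' : ℝ → ℝ} {a T b : ℝ}
    (hf : ∀ x ∈ Icc a T, HasDerivAt f (f' x) x) (ha : f a ≤ b)
    (hf' : ∀ x ∈ Icc a T, b < f x → f' x ≤ 0) : ∀ x ∈ Icc a T, f x ≤ b := by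
  intro x hx
  have hpos : 0 < x - a + 1 := by linarith [hx.1]
  refine le_of_forall_pos_le_add fun δ hδ => ?_
  -- Where `f` touches the barrier `b + ε (y - a + 1) > b` we have `f' ≤ 0 < ε`.
  set ε := δ / (x - a + 1)
  have hε : 0 < ε := by positivity
  have hline : ∀ y, HasDerivAt (fun y => b + ε * (y - a + 1)) ε y := fun y => by
    simpa using (((hasDerivAt_id y).sub_const a).add_const 1).const_mul ε |>.const_add b
  have key := image_le_of_deriv_right_lt_deriv_boundary' (B := fun y => b + ε * (y - a + 1))
    (fun y hy => (hf y hy).continuousAt.continuousWithinAt)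
    (fun y hy => (hf y (Ico_subset_Icc_self hy)).hasDerivWithinAt) (by simp; linarith)
    (fun y _ => (hline y).continuousAt.continuousWithinAt) (fun y _ => (hline y).hasDerivWithinAt)
    (fun y hy hfy => (hf' y (Ico_subset_Icc_self hy) (by
      rw [hfy]; have : 0 < ε * (y - a + 1) := mul_pos hε (by linarith [hy.1])
      linarith)).trans_lt hε) hx
  calc f x ≤ b + ε * (x - a + 1) := key
    _ = b + δ := by rw [div_mul_cancel₀ _ hpos.ne']

theorem le_of_right_le_of_deriv_nonneg_above {f f' : ℝ → ℝ} {a T b : ℝ}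
    (hf : ∀ x ∈ Icc a T, HasDerivAt f (f' x) x) (hT : f T ≤ b)
    (hf' : ∀ x ∈ Icc a T, b < f x → 0 ≤ f' x) : ∀ x ∈ Icc a T, f x ≤ b := by
  have hneg : ∀ x ∈ Icc (-T) (-a), -x ∈ Icc a T := fun x hx =>
    ⟨by linarith [hx.2], by linarith [hx.1]⟩
  intro x hx
  simpa using le_of_left_le_of_deriv_nonpos_above (f := fun y => f (-y)) (f' := fun y => -f' (-y))
    (fun y hy => by simpa using (hf (0 - y) (by simpa using hneg y hy)).comp_const_sub 0 y)
    (by simpa using hT) (fun y hy hy' => neg_nonpos.2 (hf' _ (hneg y hy) hy')) (-x)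
    ⟨by linarith [hx.2], by linarith [hx.1]⟩

theorem le_mul_exp_neg_integral_of_deriv_le {v v' k : ℝ → ℝ} {a : ℝ} (hk : Continuous k)
    (hv : ∀ t, a ≤ t → HasDerivAt v (v' t) t) (hv' : ∀ t, a ≤ t → v' t ≤ -(k t * v t)) :
    ∀ t, a ≤ t → v t ≤ v a * exp (-∫ s in a..t, k s) := by
  set I := fun t => ∫ s in a..t, k s
  have hI : ∀ t, HasDerivAt I (k t) t := fun t => (hk.integral_hasStrictDerivAt a t).hasDerivAt
  have hw : ∀ t, a ≤ t → HasDerivAt (fun t => v t * exp (I t))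
      (v' t * exp (I t) + v t * (exp (I t) * k t)) t :=
    fun t ht => (hv t ht).mul (hI t).exp
  have hanti : AntitoneOn (fun t => v t * exp (I t)) (Ici a) := by
    refine antitoneOn_of_hasDerivWithinAt_nonpos (convex_Ici a)
      (fun t ht => (hw t ht).continuousAt.continuousWithinAt)
      (fun t ht => (hw t (interior_subset ht)).hasDerivWithinAt) fun t ht => ?_
    have := hv' t (interior_subset ht)
    nlinarith [exp_pos (I t)]
  intro t ht
  have hwt := hanti self_mem_Ici ht ht
  simp only [I, integral_same, exp_zero, mul_one] at hwt
  calc v t = v t * exp (I t) * exp (-I t) := by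
        rw [mul_assoc, ← exp_add, add_neg_cancel, exp_zero, mul_one]
    _ ≤ v a * exp (-I t) := mul_le_mul_of_nonneg_right hwt (exp_pos _).le

theorem exp_le_symDenom {n : ℕ} (hn : 1 ≤ n) (β : ℝ) {g : ℝ} (hg : g ∈ Icc 0 1) :
    exp β ≤ symDenom n β g := by
  have hn : (1 : ℝ) ≤ n := by exact_mod_cast hn
  obtain ⟨hg0, hg1⟩ := hg
  have hc1 : 0 ≤ 2 * ((n : ℝ) - 1) * exp (β * (1 + g)) * g := by
    have : (0 : ℝ) ≤ n - 1 := by linarith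
    positivity
  have hc2 : 0 ≤ ((n : ℝ) - 1) * exp (2 * β * g) * (1 + (n - 2) * g) := by
    have := exp_pos (2 * β * g)
    nlinarith [mul_nonneg (mul_nonneg (sub_nonneg.2 hn) this.le)
      (by nlinarith : 0 ≤ 1 + ((n : ℝ) - 2) * g)]
  rw [symDenom, le_sqrt' (exp_pos β), ← exp_nat_mul]
  push_cast
  linarith

theorem symDenom_le {n : ℕ} (hn : 1 ≤ n) {β : ℝ} (hβ : 0 ≤ β) {g : ℝ} (hg : g ∈ Icc 0 1) :
    symDenom n β g ≤ n * exp β := by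
  have hn : (1 : ℝ) ≤ n := by exact_mod_cast hn
  obtain ⟨hg0, hg1⟩ := hg
  have he1 : exp (β * (1 + g)) ≤ exp (2 * β) := exp_le_exp.2 (by nlinarith)
  have he2 : exp (2 * β * g) ≤ exp (2 * β) := exp_le_exp.2 (by nlinarith)
  have hc1 : 0 ≤ 2 * ((n : ℝ) - 1) * g := by nlinarith
  have hc2 : 0 ≤ ((n : ℝ) - 1) * (1 + (n - 2) * g) := by nlinarith
  have hsq : ((n : ℝ) * exp β) ^ 2 = n ^ 2 * exp (2 * β) := by
    rw [mul_pow, ← exp_nat_mul]; push_cast; ring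
  rw [symDenom, sqrt_le_left (by positivity), hsq]
  nlinarith [mul_le_mul_of_nonneg_left he1 hc1, mul_le_mul_of_nonneg_left he2 hc2,
    mul_nonneg (mul_nonneg (by positivity : (0 : ℝ) ≤ n * (n - 1)) (sub_nonneg.2 hg1))
      (exp_pos (2 * β)).le]

/-- `symField n β (α t) (γ t)` unfolds to the right-hand side of the ODE at time `t`. -/
noncomputable def symField (n : ℕ) (β a g : ℝ) : ℝ :=
  2 * a * exp (β * g) * (1 - g) * ((n - 1) * g + 1) / symDenom n β g

theorem symField_nonpos {n : ℕ} (hn : 1 ≤ n) (β : ℝ) {a g : ℝ} (ha : 0 ≤ a) (hg : 1 ≤ g) :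
    symField n β a g ≤ 0 := by
  have hn : (1 : ℝ) ≤ n := by exact_mod_cast hn
  refine div_nonpos_of_nonpos_of_nonneg (mul_nonpos_of_nonpos_of_nonneg
    (mul_nonpos_of_nonneg_of_nonpos (by positivity) (by linarith)) (by nlinarith)) (sqrt_nonneg _)

theorem symField_nonneg {n : ℕ} (hn : 1 ≤ n) (β : ℝ) {a g : ℝ} (ha : 0 ≤ a) (hg : -1 / n < g)
    (hg1 : g ≤ 1) : 0 ≤ symField n β a g := by
  have hn : (1 : ℝ) ≤ n := by exact_mod_cast hn
  have hng : -1 < n * g := by rwa [div_lt_iff₀' (by linarith)] at hg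
  exact div_nonneg (mul_nonneg (mul_nonneg (by positivity) (by linarith)) (by nlinarith))
    (sqrt_nonneg _)

theorem mul_one_sub_le_symField {n : ℕ} (hn : 1 ≤ n) {β : ℝ} (hβ : 0 ≤ β) {a g : ℝ} (ha : 0 ≤ a)
    (hg : g ∈ Icc 0 1) : 2 / (n * exp β) * a * (1 - g) ≤ symField n β a g := by
  obtain ⟨hg0, hg1⟩ := hg
  have hn' : (1 : ℝ) ≤ n := by exact_mod_cast hn
  have hnum : 2 * a * (1 - g) ≤ 2 * a * exp (β * g) * (1 - g) * ((n - 1) * g + 1) := by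
    have h1 : 1 ≤ exp (β * g) := one_le_exp (by positivity)
    have h2 : 1 ≤ ((n : ℝ) - 1) * g + 1 := by nlinarith
    have h3 : 0 ≤ 2 * a * (1 - g) := by nlinarith
    calc 2 * a * (1 - g) = 2 * a * (1 - g) * 1 * 1 := by ring
      _ ≤ 2 * a * (1 - g) * exp (β * g) * ((n - 1) * g + 1) := by gcongr
      _ = _ := by ring
  calc 2 / (n * exp β) * a * (1 - g) = 2 * a * (1 - g) / (n * exp β) := by ring
    _ ≤ 2 * a * exp (β * g) * (1 - g) * ((n - 1) * g + 1) / (n * exp β) := by gcongr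
    _ ≤ symField n β a g := div_le_div_of_nonneg_left (by nlinarith)
        ((exp_pos β).trans_le (exp_le_symDenom hn β ⟨hg0, hg1⟩)) (symDenom_le hn hβ ⟨hg0, hg1⟩)

theorem symSolution_le_one {n : ℕ} (hn : 1 ≤ n) {β : ℝ} {α γ : ℝ → ℝ}
    (hα : ∀ t, 0 ≤ t → 0 ≤ α t) (hγ : ∀ t, 0 ≤ t → HasDerivAt γ (symField n β (α t) (γ t)) t)
    (h0 : γ 0 ≤ 1) {t : ℝ} (ht : 0 ≤ t) : γ t ≤ 1 :=
  le_of_left_le_of_deriv_nonpos_above (fun x hx => hγ x hx.1) h0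
    (fun x hx hx' => symField_nonpos hn β (hα x hx.1) hx'.le) t ⟨ht, le_rfl⟩

theorem symSolution_monotoneOn {n : ℕ} (hn : 1 ≤ n) {β : ℝ} {α γ : ℝ → ℝ}
    (hα : ∀ t, 0 ≤ t → 0 ≤ α t) (hγ : ∀ t, 0 ≤ t → HasDerivAt γ (symField n β (α t) (γ t)) t)
    (h0 : -1 / n < γ 0) (hle : ∀ t, 0 ≤ t → γ t ≤ 1) : MonotoneOn γ (Ici 0) := by
  have hgt : ∀ t, 0 ≤ t → -1 / n < γ t := by
    intro t ht
    by_contra! h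
    exact h0.not_ge <| le_of_right_le_of_deriv_nonneg_above (fun x hx => hγ x hx.1) h
      (fun x hx hx' => symField_nonneg hn β (hα x hx.1) hx' (hle x hx.1)) 0 ⟨le_rfl, ht⟩
  refine monotoneOn_of_hasDerivWithinAt_nonneg (convex_Ici 0)
    (fun t ht => (hγ t ht).continuousAt.continuousWithinAt)
    (fun t ht => (hγ t (interior_subset ht)).hasDerivWithinAt) fun t ht => ?_
  have ht : 0 ≤ t := interior_subset ht
  exact symField_nonneg hn β (hα t ht) (hgt t ht) (hle t ht)

/-- nGPT symmetric cosine-similarity ODE: Grönwall bound and synchronization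
under divergence of `∫ α`. -/
theorem nGPT_symmetric_ODE (n : ℕ) (hn : 2 ≤ n) (β : ℝ) (hβ : 0 < β)
    (α : ℝ → ℝ) (hαcont : Continuous α) (hαnonneg : ∀ t, 0 ≤ t → 0 ≤ α t)
    (γ : ℝ → ℝ) (hγ0 : γ 0 = 0)
    (hdyn : ∀ t, 0 ≤ t → HasDerivAt γ
      (2 * α t * Real.exp (β * γ t) * (1 - γ t) * ((n - 1) * γ t + 1) /
        symDenom n β (γ t)) t) :
    (∀ t, 0 ≤ t → 0 ≤ γ t ∧ γ t ≤ 1) ∧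
    (∀ t, 0 ≤ t →
      1 - γ t ≤ Real.exp (-(2 / (n * Real.exp β)) * ∫ s in (0:ℝ)..t, α s)) ∧
    (Tendsto (fun T => ∫ s in (0:ℝ)..T, α s) atTop atTop →
      Tendsto γ atTop (nhds 1)) := by
  have hn1 : 1 ≤ n := by omega
  have hle : ∀ t, 0 ≤ t → γ t ≤ 1 := fun t =>
    symSolution_le_one hn1 hαnonneg hdyn (by rw [hγ0]; exact zero_le_one)
  have hstart : -1 / (n : ℝ) < γ 0 := by
    rw [hγ0]; exact div_neg_of_neg_of_pos neg_one_lt_zero (Nat.cast_pos.2 hn1)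
  have hge : ∀ t, 0 ≤ t → 0 ≤ γ t := fun t ht => hγ0 ▸
    symSolution_monotoneOn hn1 hαnonneg hdyn hstart hle self_mem_Ici ht ht
  set c := 2 / (n * exp β)
  have hbound : ∀ t, 0 ≤ t → 1 - γ t ≤ exp (-c * ∫ s in (0:ℝ)..t, α s) := by
    intro t ht
    have := le_mul_exp_neg_integral_of_deriv_le (hαcont.const_mul c)
      (fun t ht => (hdyn t ht).const_sub 1)
      (fun t ht => neg_le_neg <|
        mul_one_sub_le_symField hn1 hβ.le (hαnonneg t ht) ⟨hge t ht, hle t ht⟩) t ht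
    simpa [hγ0, integral_const_mul] using this
  refine ⟨fun t ht => ⟨hge t ht, hle t ht⟩, hbound, fun hdiv => ?_⟩
  have hexp : Tendsto (fun t => exp (-c * ∫ s in (0:ℝ)..t, α s)) atTop (nhds 0) :=
    tendsto_exp_atBot.comp (hdiv.const_mul_atTop_of_neg (neg_lt_zero.2 (by positivity)))
  have hlow : Tendsto (fun t => 1 - exp (-c * ∫ s in (0:ℝ)..t, α s)) atTop (nhds 1) := by
    simpa using hexp.const_sub 1
  refine tendsto_of_tendsto_of_tendsto_of_le_of_le' hlow tendsto_const_nhds ?_ ?_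
  · filter_upwards [eventually_ge_atTop 0] with t ht
    linarith [hbound t ht]
  · filter_upwards [eventually_ge_atTop 0] with t ht using hle t ht
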